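/- Let G be a finite nonabelian group such that M(G,2) has a nontrivial half-automorphism. Then the center Z(G) is a nontrivial elementary abelian 2-group, i.e., Z(G) ≅ C₂^m for some m ≥ 1. -/

import Mathlib

/-- The Chein loop multiplication on `M(G,2) = G × Bool`,
where `(g, false)` represents `g` and `(g, true)` represents `gu`. -/
def cmul {G : Type*} [Group G] : G × Bool → G × Bool → G × Bool
  | (g, false), (h, false) => (g * h, false)
  | (g, false), (h, true)  => (h * g, true)
  | (g, true),  (h, false) => (g * h⁻¹, true)
  | (g, true),  (h, true)  => (h⁻¹ * g, false)

/-- A half-automorphism of the Chein loop `M(G,2)`. -/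
def IsHalfAut {G : Type*} [Group G] (f : G × Bool → G × Bool) : Prop :=
  Function.Bijective f ∧
    ∀ x y, f (cmul x y) = cmul (f x) (f y) ∨ f (cmul x y) = cmul (f y) (f x)

/-!
Write `u = (1, true)`. The parity `x ↦ (f x).2` of a half-automorphism `f` is a homomorphism
to `ℤ/2`. If `f` sends some element of `G` into `Gu`, the elements it keeps in `G` form a
subgroup `A` of index 2 outside of which every element is an involution, so `G` is generalized
dihedral over `A`; then `M(G,2)` has an automorphism carrying `G` onto the index-2 subloop that
`f` keeps in `G`, and composing with it we may assume `f G = G`. The restriction of `f` to `G` is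
then an automorphism or an anti-automorphism by Scott's theorem, and composing with suitable
(anti-)automorphisms of `M(G,2)` we may assume that `f` fixes `G` and `u`. Then `f (gu) = σ(g) u`
with `σ g ∈ {g, g⁻¹}` and `σ ≠ id`. If `σ` fixes an element of order `> 2`, the half-automorphism
identities show that `g²` is central whenever `σ g = g⁻¹ ≠ g`; otherwise `σ` is the inversion and
every noncommuting pair `x, y` satisfies `x y x⁻¹ = y⁻¹`, `x² = y²`, as in `Q₈`, so `x²` is
central. In both cases the same identities force every central element to square to `1`.
-/

open Function MulOpposite

lemma eq_of_sandwich {G : Type*} [Group G] (w v : G) {x y x' y' : G} (e : x = y)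
    (hx : x' = w * x * v) (hy : y' = w * y * v) : x' = y' := by
  rw [hx, hy, e]

lemma commute_mul_right_self_iff {G : Type*} [Group G] {a b : G} :
    Commute a (a * b) ↔ Commute a b := by
  simp only [Commute, SemiconjBy, mul_assoc, mul_right_inj]

lemma commute_mul_left_self_iff {G : Type*} [Group G] {a b : G} :
    Commute a (b * a) ↔ Commute a b := by
  simp only [Commute, SemiconjBy, ← mul_assoc, mul_left_inj]

section Scott
variable {G H : Type*} [Group G] [Group H]

def IsHalfHom (φ : G → H) : Prop :=
  ∀ x y, φ (x * y) = φ x * φ y ∨ φ (x * y) = φ y * φ x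

def IsStrictHomPair (φ : G → H) (a b : G) : Prop :=
  φ (a * b) = φ a * φ b ∧ ¬ Commute (φ a) (φ b)

def IsStrictAntiPair (φ : G → H) (a b : G) : Prop :=
  φ (a * b) = φ b * φ a ∧ ¬ Commute (φ a) (φ b)

lemma isStrictAntiPair_iff {φ : G → H} {a b : G} :
    IsStrictAntiPair φ a b ↔ IsStrictHomPair (op ∘ φ) a b := by
  simp only [IsStrictAntiPair, IsStrictHomPair, comp_apply, commute_op, ← op_mul, op_inj]

namespace IsHalfHom
variable {φ : G → H} (hφ : IsHalfHom φ)
include hφ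

lemma op : IsHalfHom (op ∘ φ) := fun x y => by
  rcases hφ x y with h | h <;> simp [h]

lemma map_one : φ 1 = 1 := by
  have h := hφ 1 1
  rw [one_mul, or_self] at h
  exact left_eq_mul.1 h

lemma map_mul_self (x : G) : φ (x * x) = φ x * φ x :=
  (hφ x x).elim id id

lemma map_inv (x : G) : φ x⁻¹ = (φ x)⁻¹ := by
  rcases hφ x x⁻¹ with h | h <;> rw [mul_inv_cancel, hφ.map_one] at h
  · exact eq_inv_of_mul_eq_one_right h.symm
  · exact eq_inv_of_mul_eq_one_left h.symm

lemma map_mul_mul_self {a b : G} (h : IsStrictHomPair φ a b) :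
    φ (a * (b * b)) = φ a * (φ b * φ b) := by
  obtain ⟨hab, hne⟩ := h
  have h1 := hφ (a * b) b
  have h2 := hφ a (b * b)
  rw [mul_assoc, hab] at h1
  rw [hφ.map_mul_self] at h2
  rcases h1 with h1 | h1
  · rw [h1, mul_assoc]
  · rcases h2 with h2 | h2
    · exact absurd (eq_of_sandwich 1 (φ b)⁻¹ (h2.symm.trans h1) (by group) (by group)) hne
    · exact absurd (eq_of_sandwich (φ b)⁻¹ 1 (h1.symm.trans h2) (by group) (by group)) hne

lemma map_mul_self_mul {a b : G} (h : IsStrictHomPair φ a b) :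
    φ (a * a * b) = φ a * φ a * φ b := by
  obtain ⟨hab, hne⟩ := h
  have h1 := hφ a (a * b)
  have h2 := hφ (a * a) b
  rw [← mul_assoc, hab] at h1
  rw [hφ.map_mul_self] at h2
  rcases h1 with h1 | h1
  · rw [h1, mul_assoc]
  · rcases h2 with h2 | h2
    · exact absurd (eq_of_sandwich (φ a)⁻¹ 1 (h2.symm.trans h1) (by group) (by group)) hne
    · exact absurd (eq_of_sandwich 1 (φ a)⁻¹ (h1.symm.trans h2) (by group) (by group)) hne

lemma commute_of_commute_of_map_mul {a b : G} (hc : Commute a b)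
    (hab : φ (a * b) = φ a * φ b) : Commute (φ a) (φ b) := by
  by_contra hne
  have h := hφ a (a * (b * b))
  rw [hφ.map_mul_mul_self ⟨hab, hne⟩, show a * (a * (b * b)) = a * b * (a * b) by
    rw [mul_assoc a b, ← mul_assoc b, ← hc.eq]; group, hφ.map_mul_self, hab] at h
  rcases h with h | h
  · exact hne (eq_of_sandwich (φ a)⁻¹ (φ b)⁻¹ h (by group) (by group)).symm
  · exact hne (eq_of_sandwich (φ a * φ b)⁻¹ 1 h (by group) (by group))

lemma map_commute {a b : G} (hc : Commute a b) : Commute (φ a) (φ b) := by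
  rcases hφ a b with h | h
  · exact hφ.commute_of_commute_of_map_mul hc h
  · exact (hφ.commute_of_commute_of_map_mul hc.symm (hc.eq ▸ h)).symm

lemma strictHomPair_mul_left {a b : G} (h : IsStrictHomPair φ a b) :
    IsStrictHomPair φ a (a * b) := by
  refine ⟨?_, ?_⟩
  · rw [← mul_assoc, hφ.map_mul_self_mul h, h.1, mul_assoc]
  · rw [h.1, commute_mul_right_self_iff]
    exact h.2

lemma strictHomPair_inv {a b : G} (h : IsStrictHomPair φ a b) :
    IsStrictHomPair φ b⁻¹ a⁻¹ := by
  refine ⟨?_, ?_⟩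
  · rw [← mul_inv_rev, hφ.map_inv, h.1, hφ.map_inv, hφ.map_inv, mul_inv_rev]
  · rw [hφ.map_inv, hφ.map_inv, Commute.inv_inv_iff]
    exact fun hc => h.2 hc.symm

variable (hinj : Injective φ)
include hinj

lemma strictHomPair_swap {a b : G} (h : IsStrictHomPair φ a b) : IsStrictHomPair φ b a := by
  refine ⟨(hφ b a).resolve_right fun h' => ?_, fun hc => h.2 hc.symm⟩
  exact h.2 (hφ.map_commute (hinj (h.1.trans h'.symm)))

lemma map_mul_mul_left {a b : G} (h : IsStrictHomPair φ a b) :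
    φ (a * b * a) = φ a * φ b * φ a := by
  refine ((hφ (a * b) a).resolve_right fun h' => h.2 ?_).trans (by rw [h.1])
  rw [← (hφ.strictHomPair_mul_left h).1, mul_assoc] at h'
  exact hφ.map_commute (mul_left_cancel (hinj h')).symm

lemma strictHomPair_mul_right {a b : G} (h : IsStrictHomPair φ a b) :
    IsStrictHomPair φ a (b * a) := by
  refine ⟨?_, ?_⟩
  · rw [← mul_assoc, hφ.map_mul_mul_left hinj h, (hφ.strictHomPair_swap hinj h).1, mul_assoc]
  · rw [(hφ.strictHomPair_swap hinj h).1, commute_mul_left_self_iff]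
    exact h.2

lemma strictAntiPair_swap {a b : G} (h : IsStrictAntiPair φ a b) : IsStrictAntiPair φ b a :=
  isStrictAntiPair_iff.2 <| hφ.op.strictHomPair_swap (op_injective.comp hinj)
    (isStrictAntiPair_iff.1 h)

omit hinj in
lemma strictAntiPair_mul_left {a b : G} (h : IsStrictAntiPair φ a b) :
    IsStrictAntiPair φ a (a * b) :=
  isStrictAntiPair_iff.2 <| hφ.op.strictHomPair_mul_left (isStrictAntiPair_iff.1 h)

lemma strictAntiPair_mul_right {a b : G} (h : IsStrictAntiPair φ a b) :
    IsStrictAntiPair φ a (b * a) :=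
  isStrictAntiPair_iff.2 <| hφ.op.strictHomPair_mul_right (op_injective.comp hinj)
    (isStrictAntiPair_iff.1 h)

omit hinj in
lemma strictAntiPair_inv {a b : G} (h : IsStrictAntiPair φ a b) :
    IsStrictAntiPair φ b⁻¹ a⁻¹ :=
  isStrictAntiPair_iff.2 <| hφ.op.strictHomPair_inv (isStrictAntiPair_iff.1 h)

omit hinj in
lemma map_mul_mul_cases {a x c : G} (hx : φ (x * a) = φ x * φ a) (hc : φ (a * c) = φ c * φ a)
    (hac : ¬ Commute (φ a) (φ c)) :
    Commute (φ x) (φ c) ∨ φ x * φ a * φ c = φ c * φ a * φ x ∨ Commute (φ x) (φ a) := by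
  have h1 := hφ (x * a) c
  have h2 := hφ x (a * c)
  rw [hx, mul_assoc] at h1
  rw [hc] at h2
  rcases h1 with h1 | h1 <;> rcases h2 with h2 | h2
  · exact absurd (eq_of_sandwich (φ x)⁻¹ 1 (h1.symm.trans h2) (by group) (by group)) hac
  · exact Or.inr (Or.inl (eq_of_sandwich 1 1 (h1.symm.trans h2) (by group) (by group)))
  · exact Or.inl (eq_of_sandwich 1 (φ a)⁻¹ (h1.symm.trans h2) (by group) (by group)).symm
  · exact Or.inr (Or.inr (eq_of_sandwich (φ c)⁻¹ 1 (h1.symm.trans h2) (by group) (by group)))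

lemma not_isStrictHomPair_of_isStrictAntiPair {a b c : G} (hM : IsStrictAntiPair φ a c) :
    ¬ IsStrictHomPair φ a b := by
  -- Expand `φ (x * a * c')` in two ways (`map_mul_mul_cases`) for `x ∈ {b, a b, b a}` and
  -- `c' ∈ {c, a c, c a}`: every branch makes two of `φ a`, `φ b`, `φ c` commute.
  intro hP
  have ⟨hab, hAB⟩ := hP
  have ⟨hac, hAC⟩ := hM
  have hba := (hφ.strictHomPair_swap hinj hP).1
  have haba := (hφ.strictHomPair_swap hinj (hφ.strictHomPair_mul_left hP)).1
  have hbaa := (hφ.strictHomPair_swap hinj (hφ.strictHomPair_mul_right hinj hP)).1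
  have hca := (hφ.strictAntiPair_swap hinj hM).1
  have hMaac := hφ.strictAntiPair_mul_left hM
  have hMaca := hφ.strictAntiPair_mul_right hinj hM
  rcases hφ.map_mul_mul_cases hba hac hAC with hBC | hBAC | hBA
  · rcases hφ.map_mul_mul_cases haba hac hAC with h | h | h <;> rw [hab] at h
    · have e : φ a * (φ c * φ b) = φ c * (φ a * φ b) := by
        rw [← hBC.eq]; exact eq_of_sandwich 1 1 h (by group) (by group)
      exact hAC (eq_of_sandwich 1 (φ b)⁻¹ e (by group) (by group))
    · rcases hφ.map_mul_mul_cases haba hMaac.1 hMaac.2 with r | r | r <;> simp only [hab, hac] at r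
      · have e : φ a * φ b * (φ c * φ a) = φ a * φ b * φ a * φ c := r.eq.trans h.symm
        exact hAC (eq_of_sandwich (φ a * φ b)⁻¹ 1 e (by group) (by group)).symm
      · have e : φ a * φ b * φ a * φ c * φ a = φ c * φ a * φ a * (φ a * φ b) :=
          eq_of_sandwich 1 1 r (by group) (by group)
        have h' : φ a * φ b * φ a * φ c = φ c * φ a * (φ a * φ b) :=
          eq_of_sandwich 1 1 h (by group) (by group)
        rw [h'] at e
        exact hAB (eq_of_sandwich (φ c * φ a * φ a)⁻¹ 1 e.symm (by group) (by group))
      · exact hAB (eq_of_sandwich (φ a)⁻¹ 1 r (by group) (by group)).symm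
    · exact hAB (eq_of_sandwich (φ a)⁻¹ 1 h (by group) (by group)).symm
  · rcases hφ.map_mul_mul_cases hba hMaca.1 hMaca.2 with h | h | h <;> try rw [hca] at h
    · have e : φ b * φ a * φ c = φ a * φ c * φ b := eq_of_sandwich 1 1 h (by group) (by group)
      exact hAC (eq_of_sandwich 1 (φ b)⁻¹ (hBAC.symm.trans e) (by group) (by group)).symm
    · have h' : φ b * φ a * φ a * φ c = φ a * φ c * φ a * φ b :=
        eq_of_sandwich 1 1 h (by group) (by group)
      rcases hφ.map_mul_mul_cases hbaa hac hAC with u | u | u <;> try rw [hba] at u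
      · have e : φ b * φ a * φ c = φ c * (φ b * φ a) := eq_of_sandwich 1 1 u (by group) (by group)
        exact hAB (eq_of_sandwich (φ c)⁻¹ 1 (hBAC.symm.trans e) (by group) (by group))
      · have e : φ a * φ c * φ a * φ b = φ c * φ a * φ b * φ a :=
          h'.symm.trans (eq_of_sandwich 1 1 u (by group) (by group))
        rw [← hBAC] at e
        exact hAC (eq_of_sandwich (φ b * φ a)⁻¹ 1 (h'.trans e) (by group) (by group))
      · exact hAB (eq_of_sandwich 1 (φ a)⁻¹ u (by group) (by group)).symm
    · exact hAB h.symm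
  · exact hAB hBA.symm

lemma not_isStrictHomPair_of_isStrictAntiPair_right {a b c : G}
    (hM : IsStrictAntiPair φ c b) : ¬ IsStrictHomPair φ a b := fun hP =>
  hφ.not_isStrictHomPair_of_isStrictAntiPair hinj (hφ.strictAntiPair_inv hM)
    (hφ.strictHomPair_inv hP)

lemma not_isStrictHomPair_of_isStrictAntiPair_mid {a b c : G}
    (hM : IsStrictAntiPair φ b c) : ¬ IsStrictHomPair φ a b :=
  hφ.not_isStrictHomPair_of_isStrictAntiPair_right hinj (hφ.strictAntiPair_swap hinj hM)

omit hinj in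
lemma strictHomPair_mul_of_commute {a b c : G} (h : IsStrictHomPair φ a b)
    (hac : Commute (φ a) (φ c)) (hbc : Commute (φ b) (φ c)) : IsStrictHomPair φ a (b * c) := by
  rw [IsStrictHomPair, (hφ b c).elim id (·.trans hbc.eq.symm)]
  refine ⟨?_, fun h' => h.2 (by simpa using h'.mul_right hac.inv_right)⟩
  rw [← mul_assoc, ← mul_assoc]
  rcases hφ (a * b) c with h' | h' <;> rw [h', h.1]
  exact (hac.mul_left hbc).symm.eq

omit hinj in
lemma strictAntiPair_mul_of_commute {b c d : G} (h : IsStrictAntiPair φ c d)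
    (hbc : Commute (φ b) (φ c)) (hbd : Commute (φ b) (φ d)) :
    IsStrictAntiPair φ (b * c) d := by
  have hcd : φ d * φ c ≠ φ c * φ d := fun h' => h.2 h'.symm
  have hdb : φ d * (φ b * φ c) = φ b * (φ d * φ c) := by rw [← mul_assoc, ← hbd.eq, mul_assoc]
  have hbc' : φ (b * c) = φ b * φ c := (hφ b c).elim id (·.trans hbc.eq.symm)
  have hmul := hφ (b * c) d
  rw [hbc'] at hmul
  rw [IsStrictAntiPair, hbc']
  refine ⟨hmul.resolve_left fun e => ?_, fun e => hcd (mul_left_cancel (a := φ b) ?_)⟩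
  · simp only [mul_assoc] at e
    rcases hφ b (c * d) with e' | e' <;> rw [h.1, e] at e'
    · exact hcd (mul_left_cancel e').symm
    · rw [mul_assoc, ← hbc.eq, hdb] at e'
      exact hcd (mul_left_cancel e').symm
  · rw [← hdb, ← e.eq, mul_assoc]

omit hinj in
lemma isStrictHomPair_or_isStrictAntiPair {a b : G} (h : ¬ Commute (φ a) (φ b)) :
    IsStrictHomPair φ a b ∨ IsStrictAntiPair φ a b :=
  (hφ a b).imp (⟨·, h⟩) (⟨·, h⟩)

/-- Scott's theorem, for injective half-homomorphisms. -/
theorem forall_map_mul_or_forall_map_mul_rev :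
    (∀ x y, φ (x * y) = φ x * φ y) ∨ (∀ x y, φ (x * y) = φ y * φ x) := by
  by_contra! ⟨⟨c, d, hcd⟩, ⟨a, b, hab⟩⟩
  have hP : IsStrictHomPair φ a b :=
    ⟨(hφ a b).resolve_right hab, fun h => hab (((hφ a b).resolve_right hab).trans h)⟩
  have hM : IsStrictAntiPair φ c d :=
    ⟨(hφ c d).resolve_left hcd, fun h => hcd (((hφ c d).resolve_left hcd).trans h.eq.symm)⟩
  have hAC : Commute (φ a) (φ c) := by
    by_contra h
    rcases hφ.isStrictHomPair_or_isStrictAntiPair h with h | h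
    · exact hφ.not_isStrictHomPair_of_isStrictAntiPair_mid hinj hM h
    · exact hφ.not_isStrictHomPair_of_isStrictAntiPair hinj h hP
  have hBC : Commute (φ b) (φ c) := by
    by_contra h
    rcases hφ.isStrictHomPair_or_isStrictAntiPair h with h | h
    · exact hφ.not_isStrictHomPair_of_isStrictAntiPair_mid hinj hM h
    · exact hφ.not_isStrictHomPair_of_isStrictAntiPair_mid hinj h hP
  have hBD : Commute (φ b) (φ d) := by
    by_contra h
    rcases hφ.isStrictHomPair_or_isStrictAntiPair h with h | h
    · exact hφ.not_isStrictHomPair_of_isStrictAntiPair_right hinj hM h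
    · exact hφ.not_isStrictHomPair_of_isStrictAntiPair_mid hinj h hP
  -- `(a, b * c)` and `(b * c, d)` are then strict pairs of opposite kinds sharing `b * c`
  exact hφ.not_isStrictHomPair_of_isStrictAntiPair_mid hinj
    (hφ.strictAntiPair_mul_of_commute hM hBC hBD) (hφ.strictHomPair_mul_of_commute hP hAC hBC)

end IsHalfHom
end Scott

section CenterLemmas
variable {G : Type*} [Group G]

def HasNontrivialExponentTwoCenter (G : Type*) [Group G] : Prop :=
  Subgroup.center G ≠ ⊥ ∧ ∀ z ∈ Subgroup.center G, z * z = 1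

lemma commute_mul_self_of_conj_eq_inv {x k : G} (h : x * k * x⁻¹ = k⁻¹) : Commute k (x * x) := by
  have h' : x * k⁻¹ * x⁻¹ = k := by simpa [mul_assoc] using congrArg (·⁻¹) h
  calc k * (x * x) = x * k⁻¹ * x⁻¹ * (x * x) := by rw [h']
    _ = x * (x * k * x⁻¹) * x := by rw [h]; group
    _ = x * x * k := by group

lemma hasNontrivialExponentTwoCenter_of_forall_commute_or
    (h : ∀ x y : G, Commute x y ∨ x * y * x⁻¹ = y⁻¹ ∧ x * x = y * y)
    (hnab : ∃ x y : G, ¬ Commute x y) :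
    HasNontrivialExponentTwoCenter G := by
  obtain ⟨x, y, hxy⟩ := hnab
  obtain ⟨hconj, hsq⟩ := (h x y).resolve_left hxy
  have hx4 : (x * x)⁻¹ = x * x := calc
    (x * x)⁻¹ = (x * y * x⁻¹) * (x * y * x⁻¹) := by rw [hconj, hsq]; group
    _ = x * (x * x) * x⁻¹ := by rw [hsq]; group
    _ = x * x := by group
  refine ⟨(Subgroup.ne_bot_iff_exists_ne_one).2 ⟨⟨x * x, ?_⟩, ?_⟩, fun z hz => ?_⟩
  · refine Subgroup.mem_center_iff.2 fun w => ?_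
    rcases h w x with hw | ⟨hw, -⟩
    · exact (hw.mul_right hw).eq
    · calc w * (x * x) = (w * x * w⁻¹) * (w * x * w⁻¹) * w := by group
        _ = x * x * w := by rw [hw, ← mul_inv_rev, hx4]
  · intro h1
    have hy : y⁻¹ = y := inv_eq_of_mul_eq_one_right (hsq ▸ congrArg Subtype.val h1)
    exact hxy (mul_inv_eq_iff_eq_mul.1 (hconj.trans hy))
  · have hz' := Subgroup.mem_center_iff.1 hz
    have hxz : ¬ Commute (x * z) y := fun hc => hxy <| mul_right_cancel (b := z) <| by
      rw [mul_assoc, hz' y, ← mul_assoc, hc.eq, ← mul_assoc]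
    have h2 := ((h (x * z) y).resolve_left hxz).2
    rw [← hsq, show x * z * (x * z) = x * x * (z * z) by rw [mul_assoc x z, ← hz' (x * z)]; group]
      at h2
    exact mul_eq_left.1 h2

end CenterLemmas

section HalfInversion

/- `σ` stands for a half-automorphism `f` of `M(G,2)` fixing `G` pointwise, through
`f (g, true) = (σ g, true)`; `hC2` and `hC3` are the half-automorphism identities of `f` on the
products `(g, false) (h, true)` and `(g, true) (h, true)`. -/
variable {G : Type*} [Group G] {σ : G → G}
  (hC2 : ∀ g h, σ (h * g) = σ h * g ∨ σ (h * g) = σ h * g⁻¹)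
  (hC3 : ∀ g h, h⁻¹ * g = (σ h)⁻¹ * σ g ∨ h⁻¹ * g = (σ g)⁻¹ * σ h)

include hC3

lemma conj_eq_inv_of_eq_of_eq_inv {g h : G} (hg : σ g = g) (hh : σ h = h⁻¹) (hh2 : h * h ≠ 1) :
    h * g * h⁻¹ = g⁻¹ := by
  rcases hC3 g h with e | e <;> simp only [hg, hh, inv_inv] at e
  · exact absurd (mul_eq_one_iff_eq_inv.2 (mul_right_cancel e).symm) hh2
  · have e' : g⁻¹ * h = h * g := by simpa using congrArg (·⁻¹) e
    exact eq_of_sandwich 1 h⁻¹ e'.symm (by group) (by group)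

lemma commute_or_mul_self_eq_of_eq_inv {g h : G} (hg : σ g = g⁻¹) (hh : σ h = h⁻¹) :
    Commute g h ∨ g * g = h * h := by
  rcases hC3 g h with e | e <;> rw [hg, hh, inv_inv] at e
  · exact Or.inr (eq_of_sandwich h g e (by group) (by group))
  · exact Or.inl (eq_of_sandwich h h e (by group) (by group))

include hC2

omit hC3 in
lemma eq_or_eq_inv_of_map_one (hσ1 : σ 1 = 1) (g : G) : σ g = g ∨ σ g = g⁻¹ := by
  simpa [hσ1] using hC2 g 1

lemma forall_commute_or_of_forall_eq_inv (hσ : ∀ g, σ g = g⁻¹) (x y : G) :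
    Commute x y ∨ x * y * x⁻¹ = y⁻¹ ∧ x * x = y * y := by
  refine or_iff_not_imp_left.2 fun hxy => ⟨?_, ?_⟩
  · rcases hC2 y x with e | e <;> simp only [hσ, mul_inv_rev] at e
    · have e' : x * y = y⁻¹ * x := by simpa using congrArg (·⁻¹) e
      exact eq_of_sandwich 1 x⁻¹ e' (by group) (by group)
    · have e' : x * y = y * x := by simpa using congrArg (·⁻¹) e
      exact absurd e' hxy
  · rcases hC3 y x with e | e <;> simp only [hσ, inv_inv] at e
    · exact (eq_of_sandwich x y e (by group) (by group)).symm
    · exact absurd (eq_of_sandwich x x e (by group) (by group)).symm hxy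

lemma hasNontrivialExponentTwoCenter_of_mixed (hσ1 : σ 1 = 1) {g₀ g₁ : G} (hg₀ : σ g₀ = g₀)
    (hg₀2 : g₀ * g₀ ≠ 1) (hg₁ : σ g₁ ≠ g₁) :
    HasNontrivialExponentTwoCenter G := by
  have hcover := eq_or_eq_inv_of_map_one hC2 hσ1
  have hg₁' : σ g₁ = g₁⁻¹ := (hcover g₁).resolve_left hg₁
  have hg₁2 : g₁ * g₁ ≠ 1 := fun h => hg₁ (hg₁'.trans (inv_eq_of_mul_eq_one_right h))
  refine ⟨(Subgroup.ne_bot_iff_exists_ne_one).2 ⟨⟨g₁ * g₁, ?_⟩, ?_⟩, fun z hz => ?_⟩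
  · refine Subgroup.mem_center_iff.2 fun k => ?_
    rcases hcover k with hk | hk
    · exact (commute_mul_self_of_conj_eq_inv
        (conj_eq_inv_of_eq_of_eq_inv hC3 hk hg₁' hg₁2)).eq
    · rcases commute_or_mul_self_eq_of_eq_inv hC3 hk hg₁' with hc | hc
      · exact (hc.mul_right hc).eq
      · rw [← hc, mul_assoc]
  · exact fun h => hg₁2 (congrArg Subtype.val h)
  · have hz' := Subgroup.mem_center_iff.1 hz
    by_contra hz2
    rcases hcover z with h | h
    · have e := conj_eq_inv_of_eq_of_eq_inv hC3 h hg₁' hg₁2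
      rw [hz' g₁, mul_inv_cancel_right] at e
      exact hz2 (mul_eq_one_iff_eq_inv.2 e)
    · have e := conj_eq_inv_of_eq_of_eq_inv hC3 hg₀ h hz2
      rw [← hz' g₀, mul_inv_cancel_right] at e
      exact hg₀2 (mul_eq_one_iff_eq_inv.2 e)

lemma hasNontrivialExponentTwoCenter_of_exists_ne (hσ1 : σ 1 = 1) (hne : ∃ g, σ g ≠ g)
    (hnab : ∃ x y : G, ¬ Commute x y) :
    HasNontrivialExponentTwoCenter G := by
  by_cases hmixed : ∃ g₀, σ g₀ = g₀ ∧ g₀ * g₀ ≠ 1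
  · obtain ⟨g₀, hg₀, hg₀2⟩ := hmixed
    obtain ⟨g₁, hg₁⟩ := hne
    exact hasNontrivialExponentTwoCenter_of_mixed hC2 hC3 hσ1 hg₀ hg₀2 hg₁
  · push Not at hmixed
    have hσ : ∀ g, σ g = g⁻¹ := fun g =>
      (eq_or_eq_inv_of_map_one hC2 hσ1 g).elim
        (fun h => h.trans (inv_eq_of_mul_eq_one_right (hmixed g h)).symm) id
    exact hasNontrivialExponentTwoCenter_of_forall_commute_or
      (forall_commute_or_of_forall_eq_inv hC2 hC3 hσ) hnab

end HalfInversion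

theorem exists_mulEquiv_pi_zmod_of_pow_eq_one {H : Type*} [CommGroup H] [Finite H]
    [Nontrivial H] (p : ℕ) [Fact p.Prime] (hp : ∀ x : H, x ^ p = 1) :
    ∃ m : ℕ, 1 ≤ m ∧ Nonempty (H ≃* (Fin m → Multiplicative (ZMod p))) := by
  have : Module (ZMod p) (Additive H) := AddCommMonoid.zmodModule fun x => hp x.toMul
  have : Module.Finite (ZMod p) (Additive H) := .of_finite
  refine ⟨Module.finrank (ZMod p) (Additive H),
    (Module.finrank_pos_iff_of_free (ZMod p) (Additive H)).2 inferInstance, ⟨?_⟩⟩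
  exact (AddEquiv.toMultiplicativeRight
    (Module.finBasis (ZMod p) (Additive H)).equivFun.toAddEquiv).trans
    (MulEquiv.piMultiplicative _)

lemma HasNontrivialExponentTwoCenter.exists_mulEquiv {G : Type*} [Group G] [Finite G]
    (h : HasNontrivialExponentTwoCenter G) :
    ∃ m : ℕ, 1 ≤ m ∧ Nonempty (Subgroup.center G ≃* (Fin m → Multiplicative (ZMod 2))) := by
  have := (Subgroup.nontrivial_iff_ne_bot _).2 h.1
  open scoped IsMulCommutative in
  exact exists_mulEquiv_pi_zmod_of_pow_eq_one 2 fun z =>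
    Subtype.ext (by simpa [sq] using h.2 z z.2)

section Chein
variable {G : Type*} [Group G]

@[simp] lemma cmul_false_false (g h : G) : cmul (g, false) (h, false) = (g * h, false) := rfl
@[simp] lemma cmul_false_true (g h : G) : cmul (g, false) (h, true) = (h * g, true) := rfl
@[simp] lemma cmul_true_false (g h : G) : cmul (g, true) (h, false) = (g * h⁻¹, true) := rfl
@[simp] lemma cmul_true_true (g h : G) : cmul (g, true) (h, true) = (h⁻¹ * g, false) := rfl

lemma snd_cmul (x y : G × Bool) : (cmul x y).2 = (x.2 ^^ y.2) := by
  rcases x with ⟨g, _ | _⟩ <;> rcases y with ⟨h, _ | _⟩ <;> rfl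

def IsCheinHom (f : G × Bool → G × Bool) : Prop :=
  ∀ x y, f (cmul x y) = cmul (f x) (f y)

def IsCheinAntiHom (f : G × Bool → G × Bool) : Prop :=
  ∀ x y, f (cmul x y) = cmul (f y) (f x)

def IsNontrivialHalfAut (f : G × Bool → G × Bool) : Prop :=
  IsHalfAut f ∧ ¬ IsCheinHom f ∧ ¬ IsCheinAntiHom f

lemma IsHalfAut.comp {f g : G × Bool → G × Bool} (hf : IsHalfAut f) (hg : IsHalfAut g) :
    IsHalfAut (f ∘ g) := by
  refine ⟨hf.1.comp hg.1, fun x y => ?_⟩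
  simp only [comp_apply]
  rcases hg.2 x y with h | h <;> rw [h]
  · exact hf.2 _ _
  · exact (hf.2 _ _).symm

lemma IsCheinHom.isHalfAut {f : G × Bool → G × Bool} (hf : IsCheinHom f) (hb : Bijective f) :
    IsHalfAut f :=
  ⟨hb, fun x y => Or.inl (hf x y)⟩

lemma IsCheinAntiHom.isHalfAut {f : G × Bool → G × Bool} (hf : IsCheinAntiHom f)
    (hb : Bijective f) : IsHalfAut f :=
  ⟨hb, fun x y => Or.inr (hf x y)⟩

namespace IsHalfAut
variable {f : G × Bool → G × Bool} (hf : IsHalfAut f)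
include hf

lemma snd_map_cmul (x y : G × Bool) : (f (cmul x y)).2 = ((f x).2 ^^ (f y).2) := by
  rcases hf.2 x y with h | h <;> rw [h, snd_cmul]
  exact Bool.xor_comm _ _

lemma snd_map_true (g : G) : (f (g, true)).2 = ((f (g, false)).2 ^^ (f (1, true)).2) := by
  simpa using hf.snd_map_cmul (g, false) (1, true)

lemma snd_map_mul (g h : G) : (f (g * h, false)).2 = ((f (g, false)).2 ^^ (f (h, false)).2) := by
  simpa using hf.snd_map_cmul (g, false) (h, false)

lemma map_one : f (1, false) = (1, false) := by
  have h : f (1, false) = cmul (f (1, false)) (f (1, false)) := by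
    simpa using hf.2 (1, false) (1, false)
  rcases hx : f (1, false) with ⟨a, _ | _⟩ <;> rw [hx] at h <;> simp at h
  rw [h]

end IsHalfAut

lemma IsCheinHom.comp {ψ χ : G × Bool → G × Bool} (hψ : IsCheinHom ψ) (hχ : IsCheinHom χ) :
    IsCheinHom (ψ ∘ χ) := fun x y => by
  simp only [comp_apply, hχ x y, hψ (χ x) (χ y)]

namespace IsNontrivialHalfAut
variable {f ψ : G × Bool → G × Bool} (hf : IsNontrivialHalfAut f)
include hf

lemma comp_aut (hψ : Bijective ψ) (hψm : IsCheinHom ψ) : IsNontrivialHalfAut (f ∘ ψ) := by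
  refine ⟨hf.1.comp (hψm.isHalfAut hψ), fun h => hf.2.1 ?_, fun h => hf.2.2 ?_⟩ <;>
  · intro x y
    obtain ⟨x, rfl⟩ := hψ.2 x
    obtain ⟨y, rfl⟩ := hψ.2 y
    simpa [← hψm x y] using h x y

lemma aut_comp (hψ : Bijective ψ) (hψm : IsCheinHom ψ) : IsNontrivialHalfAut (ψ ∘ f) :=
  ⟨(hψm.isHalfAut hψ).comp hf.1,
    fun h => hf.2.1 fun x y => hψ.1 (by rw [hψm]; exact h x y),
    fun h => hf.2.2 fun x y => hψ.1 (by rw [hψm]; exact h x y)⟩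

lemma antiAut_comp (hψ : Bijective ψ) (hψm : IsCheinAntiHom ψ) :
    IsNontrivialHalfAut (ψ ∘ f) :=
  ⟨(hψm.isHalfAut hψ).comp hf.1,
    fun h => hf.2.2 fun x y => hψ.1 (by rw [hψm]; exact h x y),
    fun h => hf.2.1 fun x y => hψ.1 (by rw [hψm]; exact h x y)⟩

end IsNontrivialHalfAut

def cheinInv : G × Bool → G × Bool
  | (g, false) => (g⁻¹, false)
  | (g, true) => (g, true)

lemma isCheinAntiHom_cheinInv : IsCheinAntiHom (cheinInv (G := G)) := by
  rintro ⟨g, _ | _⟩ ⟨h, _ | _⟩ <;> simp [cheinInv]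

lemma bijective_cheinInv : Bijective (cheinInv (G := G)) := by
  refine Involutive.bijective fun x => ?_
  rcases x with ⟨g, _ | _⟩ <;> simp [cheinInv]

def cheinMap (e : G ≃* G) : G × Bool → G × Bool := Prod.map e id

lemma isCheinHom_cheinMap (e : G ≃* G) : IsCheinHom (cheinMap e) := by
  rintro ⟨g, _ | _⟩ ⟨h, _ | _⟩ <;> simp [cheinMap]

lemma bijective_cheinMap (e : G ≃* G) : Bijective (cheinMap e) :=
  e.bijective.prodMap bijective_id

def cheinShift (c : G) : G × Bool → G × Bool
  | (g, false) => (g, false)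
  | (g, true) => (c * g, true)

lemma isCheinHom_cheinShift (c : G) : IsCheinHom (cheinShift c) := by
  rintro ⟨g, _ | _⟩ ⟨h, _ | _⟩ <;> simp [cheinShift, mul_assoc]

lemma bijective_cheinShift (c : G) : Bijective (cheinShift c) := by
  refine bijective_iff_has_inverse.2 ⟨cheinShift c⁻¹, fun x => ?_, fun x => ?_⟩ <;>
    rcases x with ⟨g, _ | _⟩ <;> simp [cheinShift]

end Chein

section Dihedral
variable {G : Type*} [Group G] {A : Subgroup G}

open Classical in
/-- For `G` generalized dihedral over `A` and `c ∉ A`, an automorphism of `M(G,2)` exchanging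
the subloops `G` and `A ∪ Au`. -/
noncomputable def dihedralSwap (A : Subgroup G) (c : G) (x : G × Bool) : G × Bool :=
  if (x.1 ∈ A ↔ x.2 = false) then x else (x.1 * c, !x.2)

variable (hA : A.index = 2) (hinv : ∀ g ∉ A, g * g = 1)
include hA hinv

omit hA in
lemma inv_eq_self_of_notMem {b : G} (hb : b ∉ A) : b⁻¹ = b :=
  inv_eq_of_mul_eq_one_right (hinv b hb)

lemma mul_mul_eq_inv_of_mem_of_notMem {a b : G} (ha : a ∈ A) (hb : b ∉ A) :
    b * a * b = a⁻¹ := by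
  have h := hinv (a * b) (by simp [Subgroup.mul_mem_iff_of_index_two hA, ha, hb])
  exact eq_of_sandwich a⁻¹ 1 h (by group) (by group)

lemma mul_eq_mul_inv_of_mem_of_notMem {a b : G} (ha : a ∈ A) (hb : b ∉ A) :
    a * b = b * a⁻¹ := by
  rw [← mul_mul_eq_inv_of_mem_of_notMem hA hinv ha hb, ← mul_assoc, ← mul_assoc, hinv b hb,
    one_mul]

lemma commute_of_mem {c a a' : G} (hc : c ∉ A) (ha : a ∈ A) (ha' : a' ∈ A) : Commute a a' := by
  have h := mul_mul_eq_inv_of_mem_of_notMem hA hinv (A.mul_mem ha ha') hc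
  rw [show c * (a * a') * c = (c * a * c) * (c * c)⁻¹ * (c * a' * c) by group, hinv c hc,
    mul_mul_eq_inv_of_mem_of_notMem hA hinv ha hc,
    mul_mul_eq_inv_of_mem_of_notMem hA hinv ha' hc, inv_one, mul_one, ← mul_inv_rev] at h
  exact inv_injective h.symm

lemma isCheinHom_dihedralSwap {c : G} (hc : c ∉ A) : IsCheinHom (dihedralSwap A c) := by
  have hmem := fun {g h : G} => Subgroup.mul_mem_iff_of_index_two hA (a := g) (b := h)
  have hcomm := fun {a a' : G} => commute_of_mem hA hinv hc (a := a) (a' := a')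
  have hinv' := fun {b : G} => inv_eq_self_of_notMem hinv (b := b)
  have hconj := fun {a b : G} => mul_mul_eq_inv_of_mem_of_notMem hA hinv (a := a) (b := b)
  have hrel := fun {a b : G} => mul_eq_mul_inv_of_mem_of_notMem hA hinv (a := a) (b := b)
  rintro ⟨g, _ | _⟩ ⟨h, _ | _⟩ <;> by_cases hg : g ∈ A <;> by_cases hh : h ∈ A <;>
    simp [dihedralSwap, hg, hh, hmem]
  · rw [mul_assoc]
    exact (hcomm hg (hmem.2 (iff_of_false hh hc))).eq
  · rw [mul_assoc, hrel hh hc, ← mul_assoc]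
  · rw [hinv' hc, hinv' hh, show c * h * (g * c) = c * (h * g) * c by group,
      hconj (hmem.2 (iff_of_false hh hg)) hc, mul_inv_rev, hinv' hg, hinv' hh]
  · rw [← mul_assoc, (hcomm hh hg).eq]
  · exact hrel hh hg
  · rw [hinv' hh, mul_assoc]
  · rw [mul_assoc, hrel (A.inv_mem hh) hc, inv_inv, ← mul_assoc]
  · rw [hinv' hh, hrel hg hh, show h * c * (g * c) = h * (c * g * c) by group, hconj hg hc]
  · rw [hinv' hh, hinv' hc, mul_assoc c, ← inv_inv (h * g),
      ← hrel (A.inv_mem (hmem.2 (iff_of_false hh hg))) hc, mul_inv_rev, hinv' hg, hinv' hh]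
  · rw [show g * c * (h * c) = g * (c * h * c) by group, hconj hh hc]
    exact (hcomm (A.inv_mem hh) hg).eq
  · rw [hinv' hh, mul_assoc]
  · rw [hrel (A.inv_mem hh) hg, inv_inv, hinv' hc, ← hrel hh hc, mul_assoc]

lemma bijective_dihedralSwap {c : G} (hc : c ∉ A) : Bijective (dihedralSwap A c) := by
  refine Involutive.bijective fun x => ?_
  rcases x with ⟨g, _ | _⟩ <;> by_cases hg : g ∈ A <;>
    simp [dihedralSwap, hg, hc, Subgroup.mul_mem_iff_of_index_two hA, mul_assoc, hinv c hc]

end Dihedral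

section Reduction
variable {G : Type*} [Group G] {f : G × Bool → G × Bool}

namespace IsHalfAut
variable (hf : IsHalfAut f)
include hf

def keptSubgroup : Subgroup G where
  carrier := {g | (f (g, false)).2 = false}
  one_mem' := by simp [hf.map_one]
  mul_mem' {a b} ha hb := by simp_all [hf.snd_map_mul]
  inv_mem' {a} ha := by
    have h := hf.snd_map_mul a⁻¹ a
    simp_all [hf.map_one]

lemma mem_keptSubgroup {g : G} : g ∈ hf.keptSubgroup ↔ (f (g, false)).2 = false := Iff.rfl

lemma mul_self_eq_one_of_notMem_keptSubgroup {b : G} (hb : b ∉ hf.keptSubgroup) : b * b = 1 := by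
  rw [mem_keptSubgroup, Bool.not_eq_false] at hb
  have h : f (b * b, false) = cmul (f (b, false)) (f (b, false)) := by
    simpa using hf.2 (b, false) (b, false)
  rw [show f (b, false) = ((f (b, false)).1, true) from Prod.ext rfl hb, cmul_true_true,
    inv_mul_cancel, ← hf.map_one] at h
  exact congrArg Prod.fst (hf.1.1 h)

lemma index_keptSubgroup {g₀ : G} (hg₀ : g₀ ∉ hf.keptSubgroup) : hf.keptSubgroup.index = 2 := by
  rw [mem_keptSubgroup, Bool.not_eq_false] at hg₀
  refine Subgroup.index_eq_two_iff.2 ⟨g₀, fun b => ?_⟩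
  simp only [mem_keptSubgroup, hf.snd_map_mul, hg₀, Bool.xor_true]
  cases (f (b, false)).2 <;> simp

end IsHalfAut

lemma IsNontrivialHalfAut.exists_forall_snd_eq_false (hf : IsNontrivialHalfAut f) :
    ∃ f' : G × Bool → G × Bool, IsNontrivialHalfAut f' ∧ ∀ g, (f' (g, false)).2 = false := by
  by_cases h : ∀ g, (f (g, false)).2 = false
  · exact ⟨f, hf, h⟩
  push Not at h
  obtain ⟨g₀, hg₀⟩ := h
  have hg₀A : g₀ ∉ hf.1.keptSubgroup := hg₀
  rw [ne_eq, Bool.not_eq_false] at hg₀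
  have hA := hf.1.index_keptSubgroup hg₀A
  have hinv := fun g => hf.1.mul_self_eq_one_of_notMem_keptSubgroup (b := g)
  have hρ := isCheinHom_dihedralSwap hA hinv hg₀A
  have hρb := bijective_dihedralSwap hA hinv hg₀A
  -- `f` keeps `A ∪ Au` in `G` if `f u ∈ G`, and `A ∪ (G \ A)u` otherwise
  cases hτ : (f (1, true)).2
  · refine ⟨f ∘ dihedralSwap hf.1.keptSubgroup g₀, hf.comp_aut hρb hρ, fun g => ?_⟩
    by_cases hg : (f (g, false)).2 = false <;>
      simp [dihedralSwap, hf.1.mem_keptSubgroup, hg, hg₀, hτ, hf.1.snd_map_true, hf.1.snd_map_mul]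
  · refine ⟨f ∘ (cheinShift g₀ ∘ dihedralSwap hf.1.keptSubgroup g₀),
      hf.comp_aut ((bijective_cheinShift g₀).comp hρb) ((isCheinHom_cheinShift g₀).comp hρ),
      fun g => ?_⟩
    by_cases hg : (f (g, false)).2 = false <;>
      simp [dihedralSwap, cheinShift, hf.1.mem_keptSubgroup, hg, hg₀, hτ, hf.1.snd_map_true,
        hf.1.snd_map_mul]

end Reduction

lemma map_false_eq_of_snd {G : Type*} {f : G × Bool → G × Bool}
    (hG : ∀ g, (f (g, false)).2 = false) (g : G) : f (g, false) = ((f (g, false)).1, false) :=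
  Prod.ext rfl (hG g)

section Normalization
variable {G : Type*} [Group G] {f : G × Bool → G × Bool}

namespace IsHalfAut
variable (hf : IsHalfAut f) (hG : ∀ g, (f (g, false)).2 = false)
include hf hG

lemma snd_map_one_true : (f (1, true)).2 = true := by
  by_contra hτ
  obtain ⟨⟨g, _ | _⟩, hx⟩ := hf.1.2 (1, true) <;> have h := congrArg Prod.snd hx
  · simp [hG] at h
  · rw [hf.snd_map_true, hG, Bool.false_xor] at h
    exact hτ h

lemma snd_map_true_eq_true (g : G) : (f (g, true)).2 = true := by
  rw [hf.snd_map_true, hG, hf.snd_map_one_true hG, Bool.false_xor]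

lemma isHalfHom_fst : IsHalfHom fun g => (f (g, false)).1 := fun g h => by
  rcases hf.2 (g, false) (h, false) with e | e <;>
    rw [map_false_eq_of_snd hG g, map_false_eq_of_snd hG h, cmul_false_false, cmul_false_false] at e
  exacts [Or.inl (congrArg Prod.fst e), Or.inr (congrArg Prod.fst e)]

lemma bijective_fst : Bijective fun g => (f (g, false)).1 := by
  refine ⟨fun g h e => ?_, fun h => ?_⟩
  · have e' : f (g, false) = f (h, false) := by
      rw [map_false_eq_of_snd hG g, map_false_eq_of_snd hG h]
      exact congrArg (·, false) e
    exact congrArg Prod.fst (hf.1.1 e')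
  · obtain ⟨⟨g, _ | _⟩, hx⟩ := hf.1.2 (h, false)
    · exact ⟨g, congrArg Prod.fst hx⟩
    · simpa [hf.snd_map_true_eq_true hG] using congrArg Prod.snd hx

end IsHalfAut

namespace IsNontrivialHalfAut
variable (hf : IsNontrivialHalfAut f) (hG : ∀ g, (f (g, false)).2 = false)
include hf hG

lemma exists_normalized_of_map_mul
    (hφ : ∀ g h, (f (g * h, false)).1 = (f (g, false)).1 * (f (h, false)).1) :
    ∃ f' : G × Bool → G × Bool, IsNontrivialHalfAut f' ∧
      (∀ g, f' (g, false) = (g, false)) ∧ f' (1, true) = (1, true) := by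
  let e : G ≃* G := MulEquiv.ofBijective (MonoidHom.mk' _ hφ) (hf.1.bijective_fst hG)
  have he (g : G) : e.symm (f (g, false)).1 = g := e.symm_apply_apply g
  refine ⟨cheinShift (e.symm (f (1, true)).1)⁻¹ ∘ cheinMap e.symm ∘ f,
    (hf.aut_comp (bijective_cheinMap _) (isCheinHom_cheinMap _)).aut_comp
      (bijective_cheinShift _) (isCheinHom_cheinShift _), fun g => ?_, ?_⟩
  · simp only [comp_apply]
    rw [map_false_eq_of_snd hG g]
    simp [cheinMap, cheinShift, he]
  · simp only [comp_apply]
    rw [show f (1, true) = ((f (1, true)).1, true) from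
      Prod.ext rfl (hf.1.snd_map_one_true hG)]
    simp [cheinMap, cheinShift]

lemma exists_normalized :
    ∃ f' : G × Bool → G × Bool, IsNontrivialHalfAut f' ∧
      (∀ g, f' (g, false) = (g, false)) ∧ f' (1, true) = (1, true) := by
  rcases (hf.1.isHalfHom_fst hG).forall_map_mul_or_forall_map_mul_rev
    (hf.1.bijective_fst hG).1 with hφ | hφ
  · exact hf.exists_normalized_of_map_mul hG hφ
  · have hG' (g : G) : ((cheinInv ∘ f) (g, false)).2 = false := by
      rw [comp_apply, map_false_eq_of_snd hG g]
      rfl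
    refine (hf.antiAut_comp bijective_cheinInv isCheinAntiHom_cheinInv).exists_normalized_of_map_mul
      hG' fun g h => ?_
    simp only [comp_apply]
    rw [map_false_eq_of_snd hG, map_false_eq_of_snd hG g, map_false_eq_of_snd hG h]
    simp [cheinInv, hφ]

end IsNontrivialHalfAut

lemma IsNontrivialHalfAut.hasNontrivialExponentTwoCenter (hf : IsNontrivialHalfAut f)
    (h0 : ∀ g, f (g, false) = (g, false)) (h1 : f (1, true) = (1, true))
    (hnab : ∃ x y : G, ¬ Commute x y) :
    HasNontrivialExponentTwoCenter G := by
  set σ : G → G := fun g => (f (g, true)).1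
  have hσ (g : G) : f (g, true) = (σ g, true) :=
    Prod.ext rfl (by rw [hf.1.snd_map_true, h0, h1]; rfl)
  refine hasNontrivialExponentTwoCenter_of_exists_ne (σ := σ) (fun g h => ?_) (fun g h => ?_)
    (by simp [σ, h1]) ?_ hnab
  · simpa [h0, hσ] using hf.1.2 (g, false) (h, true)
  · simpa [h0, hσ] using hf.1.2 (g, true) (h, true)
  · by_contra! hσid
    have hid (x : G × Bool) : f x = x := by
      rcases x with ⟨g, _ | _⟩ <;> simp [h0, hσ, hσid]
    exact hf.2.1 fun x y => by simp [hid]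

end Normalization

/-- If a finite nonabelian group `G` is such that `M(G,2)` has a nontrivial
half-automorphism, then the center of `G` is isomorphic to `C₂^m` for some
`m ≥ 1`. -/
theorem center_elementary_abelian_two {G : Type*} [Group G] [Finite G]
    (hnab : ∃ a b : G, a * b ≠ b * a)
    (hhalf : ∃ f : G × Bool → G × Bool, IsHalfAut f ∧
      (¬ ∀ x y : G × Bool, f (cmul x y) = cmul (f x) (f y)) ∧
      (¬ ∀ x y : G × Bool, f (cmul x y) = cmul (f y) (f x))) :
    ∃ m : ℕ, 1 ≤ m ∧
      Nonempty (Subgroup.center G ≃* (Fin m → Multiplicative (ZMod 2))) := by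
  obtain ⟨f, hf⟩ := hhalf
  obtain ⟨f₁, hf₁, hG⟩ := IsNontrivialHalfAut.exists_forall_snd_eq_false hf
  obtain ⟨f₂, hf₂, h0, h1⟩ := hf₁.exists_normalized hG
  exact (hf₂.hasNontrivialExponentTwoCenter h0 h1 hnab).exists_mulEquiv
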